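/- arXiv:1408.0902 — 2 statements merged into one kernel-verified Lean document; each statement's English description precedes it below -/
import Mathlib

section
/- Let $E$ be a symmetric trace-free $n \times n$ real matrix ($n \ge 2$). Then $\operatorname{tr}(E^3) \ge -\frac{n-2}{\sqrt{n(n-1)}} \, (\operatorname{tr}(E^2))^{3/2}$. -/
/-!
Diagonalizing `E` reduces the claim to its eigenvalues `a : Fin n → ℝ`, with `∑ aᵢ = 0`. Write
`∑ aᵢ² = n (n - 1) t²` with `t ≥ 0`. Cauchy–Schwarz on the other `n - 1` coordinates gives
`aᵢ ≥ -(n - 1) t`, so `∑ (aᵢ + (n - 1) t) (aᵢ - t)² ≥ 0`, and this sum expands to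
`∑ aᵢ³ + (n - 2) t ∑ aᵢ²`. Equality holds at `a = (-(n - 1) t, t, …, t)`.
-/

theorem Matrix.IsHermitian.trace_pow_eq_sum_eigenvalues_pow {𝕜 n : Type*} [RCLike 𝕜] [Fintype n]
    [DecidableEq n] {A : Matrix n n 𝕜} (hA : A.IsHermitian) (k : ℕ) :
    (A ^ k).trace = ∑ i, (hA.eigenvalues i : 𝕜) ^ k := by
  conv_lhs => rw [hA.spectral_theorem, ← map_pow, Unitary.conjStarAlgAut_apply,
    Matrix.trace_mul_cycle, Unitary.coe_star_mul_self, one_mul, Matrix.diagonal_pow,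
    Matrix.trace_diagonal]
  simp

open Finset

section SumEqZero

variable {ι : Type*} [Fintype ι] {a : ι → ℝ}

theorem card_mul_sq_le_of_sum_eq_zero (h : ∑ j, a j = 0) (i : ι) :
    Fintype.card ι * a i ^ 2 ≤ (Fintype.card ι - 1) * ∑ j, a j ^ 2 := by
  classical
  have hrest : ∑ j ∈ univ.erase i, a j = -a i := by
    rw [sum_erase_eq_sub (mem_univ i), h, zero_sub]
  have hcs := sq_sum_le_card_mul_sum_sq (s := univ.erase i) (f := a)
  rw [hrest, card_erase_of_mem (mem_univ i), card_univ, sum_erase_eq_sub (mem_univ i),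
    Nat.cast_pred (Fintype.card_pos_iff.mpr ⟨i⟩)] at hcs
  linarith

theorem neg_mul_le_sum_cube_of_sum_eq_zero (h : ∑ i, a i = 0) {t : ℝ} (ht : 0 ≤ t)
    (hts : Fintype.card ι * (Fintype.card ι - 1) * t ^ 2 = ∑ i, a i ^ 2) :
    -((Fintype.card ι - 2) * t * ∑ i, a i ^ 2) ≤ ∑ i, a i ^ 3 := by
  set n : ℝ := (Fintype.card ι : ℝ)
  have hlower : ∀ i, -((n - 1) * t) ≤ a i := fun i ↦ by
    have hn : 1 ≤ n := Nat.one_le_cast.mpr (Fintype.card_pos_iff.mpr ⟨i⟩)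
    have hsq : a i ^ 2 ≤ ((n - 1) * t) ^ 2 := by
      have := card_mul_sq_le_of_sum_eq_zero h i
      rw [← hts] at this
      nlinarith
    exact (abs_le_of_sq_le_sq' hsq (by positivity)).1
  have hexpand : ∑ i, (a i + (n - 1) * t) * (a i - t) ^ 2 =
      ∑ i, a i ^ 3 + (n - 3) * t * ∑ i, a i ^ 2 - (2 * n - 3) * t ^ 2 * ∑ i, a i
        + n * (n - 1) * t ^ 3 := by
    rw [show n * (n - 1) * t ^ 3 = ∑ _i : ι, (n - 1) * t ^ 3 by simp [n, mul_assoc]]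
    simp only [mul_sum, ← sum_add_distrib, ← sum_sub_distrib]
    exact sum_congr rfl fun i _ ↦ by ring
  have hnonneg : 0 ≤ ∑ i, (a i + (n - 1) * t) * (a i - t) ^ 2 :=
    sum_nonneg fun i _ ↦ mul_nonneg (by linarith [hlower i]) (sq_nonneg _)
  rw [hexpand, h] at hnonneg
  linear_combination hnonneg + t * hts

end SumEqZero

theorem Real.rpow_three_halves {s : ℝ} (hs : 0 ≤ s) : s ^ ((3 : ℝ) / 2) = s * √s := by
  rw [show (3 : ℝ) / 2 = 1 + 1 / 2 by norm_num, Real.rpow_add' hs (by norm_num), Real.rpow_one,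
    Real.sqrt_eq_rpow]

/-- For a symmetric trace-free `n × n` real matrix `E` (`n ≥ 2`),
`tr(E³) ≥ -((n-2)/√(n(n-1))) · (tr(E²))^{3/2}`. -/
theorem cubic_trace_inequality (n : ℕ) (hn : 2 ≤ n)
    (E : Matrix (Fin n) (Fin n) ℝ) (hsymm : E.IsSymm) (htr : E.trace = 0) :
    (E ^ 3).trace ≥
      -((n - 2 : ℝ) / Real.sqrt (n * (n - 1))) * ((E ^ 2).trace) ^ ((3 : ℝ) / 2) := by
  have hE : E.IsHermitian := Matrix.isHermitian_iff_isSymm.mpr hsymm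
  have htrace (k : ℕ) : (E ^ k).trace = ∑ i, hE.eigenvalues i ^ k := by
    simpa using hE.trace_pow_eq_sum_eigenvalues_pow k
  have hsum : ∑ i, hE.eigenvalues i = 0 := by simpa [htr] using (htrace 1).symm
  rw [htrace 2, htrace 3]
  set s := ∑ i, hE.eigenvalues i ^ 2
  have hs : 0 ≤ s := by positivity
  have hc : 0 < (n : ℝ) * (n - 1) := by
    have : (2 : ℝ) ≤ n := by exact_mod_cast hn
    nlinarith
  have hts : (n : ℝ) * (n - 1) * (√s / √(n * (n - 1))) ^ 2 = s := by
    rw [div_pow, Real.sq_sqrt hs, Real.sq_sqrt hc.le, mul_div_cancel₀ s hc.ne']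
  have hcube : -((n - 2) * (√s / √(n * (n - 1))) * s) ≤ ∑ i, hE.eigenvalues i ^ 3 := by
    simpa only [Fintype.card_fin] using neg_mul_le_sum_cube_of_sum_eq_zero hsum (by positivity)
      (by simpa only [Fintype.card_fin] using hts)
  rw [Real.rpow_three_halves hs, ge_iff_le]
  convert hcube using 1
  ring
end

section
/- Let $T'$ be a symmetric $2$-tensor on an inner product space $V$ of dimension $n$, diagonalizable with orthonormal eigenbasis $e_1,\dots,e_n$ and eigenvalues $\lambda_1,\dots,\lambda_n$, and let $\mathrm{Rm}$ be an algebraic curvature tensor with Ricci contraction $\mathrm{Ric}$. Then $-\mathrm{Rm}_{ikjl}T'_{ij}T'_{kl} + \mathrm{Ric}_{jk}T'_{ij}T'_{ik} = \frac{1}{2}\sum_{i,j} \mathrm{Rm}(e_i,e_j,e_i,e_j)(\lambda_i - \lambda_j)^2$. -/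
/-! In the eigenbasis both contractions collapse onto the sectional terms `K i j = Rm i j i j`:
the left side is `∑ K i j (λ j ^ 2 - λ i λ j)`. Because `K` is symmetric, expanding
`(λ i - λ j) ^ 2` gives exactly twice this. -/

open Finset

section DiagonalContraction

variable {ι R : Type*} [Fintype ι] [CommRing R]

theorem sum_rm_mul_diag_mul_diag [DecidableEq ι] (Rm : ι → ι → ι → ι → R) (l : ι → R)
    (T : ι → ι → R) (hT : ∀ i j, T i j = if i = j then l i else 0) :
    ∑ i, ∑ k, ∑ j, ∑ m, Rm i k j m * T i j * T k m = ∑ i, ∑ k, Rm i k i k * l i * l k := by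
  simp only [hT, mul_ite, mul_zero, ite_mul, zero_mul, sum_ite_eq, mem_univ, if_true]

theorem sum_ric_mul_diag_mul_diag [DecidableEq ι] (Ric : ι → ι → R) (l : ι → R) (T : ι → ι → R)
    (hT : ∀ i j, T i j = if i = j then l i else 0) :
    ∑ i, ∑ j, ∑ k, Ric j k * T i j * T i k = ∑ i, Ric i i * l i ^ 2 := by
  simp only [hT, mul_ite, mul_zero, ite_mul, zero_mul, sum_ite_eq, mem_univ, if_true]
  exact sum_congr rfl fun i _ => by ring

theorem sum_mul_sub_sq_of_symm (S : ι → ι → R) (hS : ∀ i j, S j i = S i j) (l : ι → R) :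
    ∑ i, ∑ j, S i j * (l i - l j) ^ 2 =
      2 * ∑ i, (∑ j, S j i) * l i ^ 2 - 2 * ∑ i, ∑ j, S i j * l i * l j := by
  have hfirst : ∑ i, ∑ j, S i j * l i ^ 2 = ∑ i, (∑ j, S j i) * l i ^ 2 := by
    simp only [sum_mul, hS]
  have hsecond : ∑ i, ∑ j, S i j * l j ^ 2 = ∑ i, (∑ j, S j i) * l i ^ 2 := by
    rw [sum_comm]; simp only [sum_mul]
  calc ∑ i, ∑ j, S i j * (l i - l j) ^ 2
      = ∑ i, ∑ j, S i j * l i ^ 2 + ∑ i, ∑ j, S i j * l j ^ 2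
          - 2 * ∑ i, ∑ j, S i j * l i * l j := by
        simp only [mul_sum, ← sum_add_distrib, ← sum_sub_distrib]
        exact sum_congr rfl fun i _ => sum_congr rfl fun j _ => by ring
    _ = _ := by rw [hfirst, hsecond]; ring

end DiagonalContraction

theorem sectional_symm {ι R : Type*} [Ring R] (Rm : ι → ι → ι → ι → R)
    (hA1 : ∀ a b c d, Rm a b c d = -Rm b a c d) (hA2 : ∀ a b c d, Rm a b c d = -Rm a b d c)
    (a b : ι) : Rm b a b a = Rm a b a b := by
  rw [hA1 b a b a, hA2 a b b a, neg_neg]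

theorem curvature_quadratic_form_eigenvalues_general (n : ℕ)
    (Rm : Fin n → Fin n → Fin n → Fin n → ℝ)
    (hA1 : ∀ a b c d, Rm a b c d = -Rm b a c d)
    (hA2 : ∀ a b c d, Rm a b c d = -Rm a b d c)
    (Ric : Fin n → Fin n → ℝ) (hRic : ∀ j k, Ric j k = ∑ i, Rm i j i k)
    (l : Fin n → ℝ) (T : Fin n → Fin n → ℝ)
    (hT : ∀ i j, T i j = if i = j then l i else 0) :
    -(∑ i, ∑ k, ∑ j, ∑ m, Rm i k j m * T i j * T k m) +
        (∑ i, ∑ j, ∑ k, Ric j k * T i j * T i k) =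
      (1 / 2) * ∑ i, ∑ j, Rm i j i j * (l i - l j) ^ 2 := by
  have hsq := sum_mul_sub_sq_of_symm (fun i j => Rm i j i j) (sectional_symm Rm hA1 hA2) l
  simp only [← hRic] at hsq
  rw [sum_rm_mul_diag_mul_diag Rm l T hT, sum_ric_mul_diag_mul_diag Ric l T hT, hsq]
  ring

/-- For a symmetric 2-tensor `T'` diagonal in an orthonormal basis with
eigenvalues `λᵢ`, and an algebraic curvature tensor `Rm` with Ricci contraction `Ric`,
`-Rm_{ikjl} T'_{ij} T'_{kl} + Ric_{jk} T'_{ij} T'_{ik}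
  = ½ ∑_{i,j} Rm(eᵢ,eⱼ,eᵢ,eⱼ) (λᵢ - λⱼ)²`. -/
theorem curvature_quadratic_form_eigenvalues (n : ℕ)
    (Rm : Fin n → Fin n → Fin n → Fin n → ℝ)
    (hA1 : ∀ a b c d, Rm a b c d = -Rm b a c d)
    (hA2 : ∀ a b c d, Rm a b c d = -Rm a b d c)
    (hPair : ∀ a b c d, Rm a b c d = Rm c d a b)
    (hBianchi : ∀ a b c d, Rm a b c d + Rm b c a d + Rm c a b d = 0)
    (Ric : Fin n → Fin n → ℝ) (hRic : ∀ j k, Ric j k = ∑ i, Rm i j i k)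
    (l : Fin n → ℝ) (T : Fin n → Fin n → ℝ)
    (hT : ∀ i j, T i j = if i = j then l i else 0) :
    -(∑ i, ∑ k, ∑ j, ∑ m, Rm i k j m * T i j * T k m) +
        (∑ i, ∑ j, ∑ k, Ric j k * T i j * T i k) =
      (1 / 2) * ∑ i, ∑ j, Rm i j i j * (l i - l j) ^ 2 :=
  curvature_quadratic_form_eigenvalues_general n Rm hA1 hA2 Ric hRic l T hT
end
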